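/- Termination of the transition system: For every (finite) defeasible theory D and every set C of extended conclusions over the literals of the language of D, there is no infinite sequence of transitions (D, C) = (D₀, C₀) ⟹ (D₁, C₁) ⟹ (D₂, C₂) ⟹ ⋯ in which every transition properly changes the state. Consequently, every maximal transition sequence starting from (D, ∅) reaches a state (D', C') with (D', C') ⟹̸. -/
import Mathlib


/-- A propositional literal: an atom or its negation. -/
inductive Lit where
  | pos : ℕ → Lit
  | neg : ℕ → Lit
deriving DecidableEq

/-- The complement ~q of a literal q. -/
def Lit.compl : Lit → Lit
  | .pos n => .neg n
  | .neg n => .pos n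

/-- The atom underlying a literal. -/
def Lit.atom : Lit → ℕ
  | .pos n => n
  | .neg n => n

/-- The three kinds of rules: strict (→), defeasible (⇒), defeater (⇝). -/
inductive RuleKind where
  | strict | defeasible | defeater
deriving DecidableEq

/-- A rule: a finite body of literals, a head literal, and a kind. -/
structure Rule where
  body : Finset Lit
  head : Lit
  kind : RuleKind
deriving DecidableEq

/-- A propositional defeasible theory: finite facts, finite rules, and an
acyclic superiority relation on rules. -/
structure DTheory where
  facts : Finset Lit
  rules : Finset Rule
  sup : Rule → Rule → Prop
  sup_acyclic : ∀ r, ¬ Relation.TransGen sup r r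

/-- Tagged literals (extended conclusions): tags ±Δ, ±∂, ±σ. -/
inductive TaggedLit where
  | pDelta : Lit → TaggedLit
  | mDelta : Lit → TaggedLit
  | pPartial : Lit → TaggedLit
  | mPartial : Lit → TaggedLit
  | pSigma : Lit → TaggedLit
  | mSigma : Lit → TaggedLit
deriving DecidableEq

/-- The literal of a tagged literal. -/
def TaggedLit.lit : TaggedLit → Lit
  | .pDelta q => q
  | .mDelta q => q
  | .pPartial q => q
  | .mPartial q => q
  | .pSigma q => q
  | .mSigma q => q

/-- Tagged literals whose tag is among +Δ, −Δ, +∂, −∂ (conclusions proper). -/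
def TaggedLit.IsConclusionTag : TaggedLit → Prop
  | .pDelta _ => True
  | .mDelta _ => True
  | .pPartial _ => True
  | .mPartial _ => True
  | .pSigma _ => False
  | .mSigma _ => False

/-- R_s[q]: strict rules with head q. -/
def DTheory.Rs (D : DTheory) (q : Lit) : Set Rule :=
  {r | r ∈ D.rules ∧ r.kind = RuleKind.strict ∧ r.head = q}

/-- R_sd[q]: strict and defeasible rules with head q. -/
def DTheory.Rsd (D : DTheory) (q : Lit) : Set Rule :=
  {r | r ∈ D.rules ∧ r.kind ≠ RuleKind.defeater ∧ r.head = q}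

/-- R_d[q]: defeasible rules with head q. -/
def DTheory.Rd (D : DTheory) (q : Lit) : Set Rule :=
  {r | r ∈ D.rules ∧ r.kind = RuleKind.defeasible ∧ r.head = q}

/-- R[q]: all rules with head q. -/
def DTheory.Rall (D : DTheory) (q : Lit) : Set Rule :=
  {r | r ∈ D.rules ∧ r.head = q}

/-- The rules used for defeasible provability (tags ±∂, ±σ): under separated
reasoning (`sep = true`) these are the defeasible rules R_d[q]; under the
standard interpretation (`sep = false`) they are R_sd[q]. -/
def DTheory.RD (D : DTheory) (sep : Bool) (q : Lit) : Set Rule :=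
  if sep then D.Rd q else D.Rsd q

/-- `Step sep D S c` holds iff the tagged literal `c` may be appended to a
derivation in `D` whose set of preceding lines is `S`, by one of the inference
rules (±Δ, ±∂, ±σ).  `sep` selects separated reasoning. -/
inductive Step (sep : Bool) (D : DTheory) (S : Set TaggedLit) : TaggedLit → Prop
  | plusDelta (q : Lit) :
      (q ∈ D.facts ∨ ∃ r ∈ D.Rs q, ∀ a ∈ r.body, TaggedLit.pDelta a ∈ S) →
      Step sep D S (TaggedLit.pDelta q)
  | minusDelta (q : Lit) :
      q ∉ D.facts →
      (∀ r ∈ D.Rs q, ∃ a ∈ r.body, TaggedLit.mDelta a ∈ S) →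
      Step sep D S (TaggedLit.mDelta q)
  | plusPartial (q : Lit) :
      (TaggedLit.pDelta q ∈ S ∨
        ((∃ r ∈ D.RD sep q, ∀ a ∈ r.body, TaggedLit.pPartial a ∈ S) ∧
         TaggedLit.mDelta q.compl ∈ S ∧
         (∀ s ∈ D.Rall q.compl,
            (∃ a ∈ s.body, TaggedLit.mPartial a ∈ S) ∨
            (∃ t ∈ D.RD sep q, D.sup t s ∧ ∀ a ∈ t.body, TaggedLit.pPartial a ∈ S)))) →
      Step sep D S (TaggedLit.pPartial q)
  | minusPartial (q : Lit) :
      TaggedLit.mDelta q ∈ S →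
      ((∀ r ∈ D.RD sep q, ∃ a ∈ r.body, TaggedLit.mPartial a ∈ S) ∨
       TaggedLit.pDelta q.compl ∈ S ∨
       (∃ s ∈ D.Rall q.compl,
          (∀ a ∈ s.body, TaggedLit.pPartial a ∈ S) ∧
          (∀ t ∈ D.RD sep q,
             (∃ a ∈ t.body, TaggedLit.mPartial a ∈ S) ∨ ¬ D.sup t s))) →
      Step sep D S (TaggedLit.mPartial q)
  | plusSigma (q : Lit) :
      (∃ r ∈ D.RD sep q, ∀ a ∈ r.body, TaggedLit.pPartial a ∈ S) →
      Step sep D S (TaggedLit.pSigma q)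
  | minusSigma (q : Lit) :
      (∀ r ∈ D.RD sep q, ∃ a ∈ r.body, TaggedLit.mPartial a ∈ S) →
      Step sep D S (TaggedLit.mSigma q)

/-- Derivations: finite sequences of tagged literals, each justified by its
predecessors via the inference rules. -/
inductive IsDerivation (sep : Bool) (D : DTheory) : List TaggedLit → Prop
  | nil : IsDerivation sep D []
  | snoc (P : List TaggedLit) (c : TaggedLit) :
      IsDerivation sep D P → Step sep D {x | x ∈ P} c →
      IsDerivation sep D (P ++ [c])

/-- D ⊢ c : the tagged literal c occurs in some derivation in D. -/
def Proves (sep : Bool) (D : DTheory) (c : TaggedLit) : Prop :=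
  ∃ P, IsDerivation sep D P ∧ c ∈ P

/-- A basic defeasible theory: no defeaters and an empty superiority relation. -/
def DTheory.Basic (D : DTheory) : Prop :=
  (∀ r ∈ D.rules, r.kind ≠ RuleKind.defeater) ∧ (∀ r s : Rule, ¬ D.sup r s)

/-- D has duplicated strict rules: every strict rule has a defeasible copy. -/
def DTheory.DupStrictRules (D : DTheory) : Prop :=
  ∀ r ∈ D.rules, r.kind = RuleKind.strict →
    Rule.mk r.body r.head RuleKind.defeasible ∈ D.rules

/-- The literals of the (finite) language of D: all literals over atoms
occurring in D. -/
def DTheory.lits (D : DTheory) : Set Lit :=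
  {l | (∃ f ∈ D.facts, f.atom = l.atom) ∨
       ∃ r ∈ D.rules, r.head.atom = l.atom ∨ ∃ a ∈ r.body, a.atom = l.atom}

/-- The transition system on states (D, C).  `L` is the set of literals of the
language of the original theory, over which q ranges in transitions (1)–(6). -/
inductive DLTrans (L : Set Lit) : DTheory × Set TaggedLit → DTheory × Set TaggedLit → Prop
  | t1 (D : DTheory) (C : Set TaggedLit) (q : Lit) :
      q ∈ L →
      (q ∈ D.facts ∨
        ∃ r ∈ D.rules, r.kind = RuleKind.strict ∧ r.head = q ∧ r.body = ∅) →
      DLTrans L (D, C)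
        (D, C ∪ {TaggedLit.pDelta q, TaggedLit.pPartial q, TaggedLit.pSigma q})
  | t2 (D : DTheory) (C : Set TaggedLit) (q : Lit) :
      q ∈ L →
      (∃ r ∈ D.rules, r.kind = RuleKind.defeasible ∧ r.head = q ∧ r.body = ∅) →
      DLTrans L (D, C) (D, insert (TaggedLit.pSigma q) C)
  | t3 (D : DTheory) (C : Set TaggedLit) (q : Lit) :
      q ∈ L →
      (∀ r ∈ D.rules, ¬(r.kind = RuleKind.strict ∧ r.head = q)) →
      q ∉ D.facts →
      DLTrans L (D, C) (D, insert (TaggedLit.mDelta q) C)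
  | t4 (D : DTheory) (C : Set TaggedLit) (q : Lit) :
      q ∈ L →
      (∀ r ∈ D.rules, r.head ≠ q) →
      DLTrans L (D, C) (D, insert (TaggedLit.mSigma q) C)
  | t5 (D : DTheory) (C : Set TaggedLit) (q : Lit) :
      q ∈ L →
      (TaggedLit.pDelta q ∈ C ∨
        (TaggedLit.pSigma q ∈ C ∧ TaggedLit.mDelta q.compl ∈ C ∧
         TaggedLit.mSigma q.compl ∈ C)) →
      DLTrans L (D, C) (D, insert (TaggedLit.pPartial q) C)
  | t6 (D : DTheory) (C : Set TaggedLit) (q : Lit) :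
      q ∈ L →
      TaggedLit.mDelta q ∈ C →
      (TaggedLit.pDelta q.compl ∈ C ∨ TaggedLit.pSigma q.compl ∈ C ∨
       TaggedLit.mSigma q ∈ C) →
      DLTrans L (D, C) (D, insert (TaggedLit.mPartial q) C)
  | t7 (D : DTheory) (C : Set TaggedLit) (r : Rule) (q : Lit) :
      r ∈ D.rules → r.kind = RuleKind.strict → q ∈ r.body →
      TaggedLit.pDelta q ∈ C →
      DLTrans L (D, C)
        (⟨D.facts, insert (Rule.mk (r.body.erase q) r.head r.kind) (D.rules.erase r),
          D.sup, D.sup_acyclic⟩, C)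
  | t8 (D : DTheory) (C : Set TaggedLit) (r : Rule) (q : Lit) :
      r ∈ D.rules → r.kind = RuleKind.defeasible → q ∈ r.body →
      TaggedLit.pPartial q ∈ C →
      DLTrans L (D, C)
        (⟨D.facts, insert (Rule.mk (r.body.erase q) r.head r.kind) (D.rules.erase r),
          D.sup, D.sup_acyclic⟩, C)
  | t9 (D : DTheory) (C : Set TaggedLit) (r : Rule) (q : Lit) :
      r ∈ D.rules → r.kind = RuleKind.strict → q ∈ r.body →
      TaggedLit.mDelta q ∈ C →
      DLTrans L (D, C) (⟨D.facts, D.rules.erase r, D.sup, D.sup_acyclic⟩, C)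
  | t10 (D : DTheory) (C : Set TaggedLit) (r : Rule) (q : Lit) :
      r ∈ D.rules → r.kind = RuleKind.defeasible → q ∈ r.body →
      TaggedLit.mPartial q ∈ C →
      DLTrans L (D, C) (⟨D.facts, D.rules.erase r, D.sup, D.sup_acyclic⟩, C)

/-- (D, C) ⟹̸ : every applicable transition leaves the state unchanged. -/
def Stuck (L : Set Lit) (s : DTheory × Set TaggedLit) : Prop :=
  ∀ s', DLTrans L s s' → s' = s

/-- D derives C: some transition sequence from (D, ∅) reaches a stuck state
(D', C'), and C is the set of members of C' with tags among +Δ, −Δ, +∂, −∂. -/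
def Derives (D : DTheory) (C : Set TaggedLit) : Prop :=
  ∃ D' C', Relation.ReflTransGen (DLTrans D.lits) (D, (∅ : Set TaggedLit)) (D', C') ∧
    Stuck D.lits (D', C') ∧
    C = {c | c ∈ C' ∧ c.IsConclusionTag}

/-- Finite set of atoms of a theory. -/
def DTheory.atomsFin (D : DTheory) : Finset ℕ :=
  D.facts.image Lit.atom ∪
    D.rules.biUnion (fun r => insert r.head.atom (r.body.image Lit.atom))

/-- Finite set of literals covering `D.lits`. -/
def DTheory.litsFin (D : DTheory) : Finset Lit :=
  D.atomsFin.biUnion (fun n => {Lit.pos n, Lit.neg n})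

lemma mem_litsFin {D : DTheory} {l : Lit} (h : l ∈ D.lits) : l ∈ D.litsFin := by
  have hat : l.atom ∈ D.atomsFin := by
    rcases h with ⟨f, hf, hfa⟩ | ⟨r, hr, hh⟩
    · exact Finset.mem_union_left _ (Finset.mem_image.2 ⟨f, hf, hfa⟩)
    · refine Finset.mem_union_right _ (Finset.mem_biUnion.2 ⟨r, hr, ?_⟩)
      rcases hh with hh | ⟨a, ha, haa⟩
      · exact Finset.mem_insert.2 (Or.inl hh.symm)
      · exact Finset.mem_insert.2 (Or.inr (Finset.mem_image.2 ⟨a, ha, haa⟩))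
  refine Finset.mem_biUnion.2 ⟨l.atom, hat, ?_⟩
  cases l <;> simp [Lit.atom]

/-- Finite set of tagged literals over the language of `D`. -/
def DTheory.tagFin (D : DTheory) : Finset TaggedLit :=
  D.litsFin.biUnion (fun q =>
    {TaggedLit.pDelta q, TaggedLit.mDelta q, TaggedLit.pPartial q,
     TaggedLit.mPartial q, TaggedLit.pSigma q, TaggedLit.mSigma q})

lemma lit_mem_tagFin {D : DTheory} {c : TaggedLit} (h : c.lit ∈ D.lits) :
    c ∈ D.tagFin := by
  refine Finset.mem_biUnion.2 ⟨c.lit, mem_litsFin h, ?_⟩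
  cases c <;> simp [TaggedLit.lit]

/-- Total size of the rule set. -/
def ruleM (D : DTheory) : ℕ := ∑ r ∈ D.rules, (r.body.card + 1)

open Classical in
noncomputable def tsMeasure (D0 : DTheory) (s : DTheory × Set TaggedLit) : ℕ × ℕ :=
  ((D0.tagFin.filter (fun c => c ∉ s.2)).card, ruleM s.1)

open Classical in
lemma muC_lt (D0 : DTheory) {C C' : Set TaggedLit} (hsub : C ⊆ C')
    {x : TaggedLit} (hx : x ∈ D0.tagFin) (hxC : x ∉ C) (hxC' : x ∈ C') :
    (D0.tagFin.filter (fun c => c ∉ C')).card <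
      (D0.tagFin.filter (fun c => c ∉ C)).card := by
  apply Finset.card_lt_card
  constructor
  · intro c hc
    rw [Finset.mem_filter] at hc ⊢
    exact ⟨hc.1, fun h => hc.2 (hsub h)⟩
  · intro hcon
    have := hcon (Finset.mem_filter.2 ⟨hx, hxC⟩)
    rw [Finset.mem_filter] at this
    exact this.2 hxC'

lemma ruleM_erase_lt {D : DTheory} {r : Rule} (hr : r ∈ D.rules) :
    ∑ x ∈ D.rules.erase r, (x.body.card + 1) < ruleM D := by
  have h : (r.body.card + 1) + ∑ x ∈ D.rules.erase r, (x.body.card + 1)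
      = ∑ x ∈ D.rules, (x.body.card + 1) := by
    exact Finset.add_sum_erase _ (fun x => x.body.card + 1) hr
  rw [ruleM, ← h]
  omega

lemma ruleM_replace_lt {D : DTheory} {r : Rule} {q : Lit}
    (hr : r ∈ D.rules) (hq : q ∈ r.body) :
    ∑ x ∈ insert (Rule.mk (r.body.erase q) r.head r.kind) (D.rules.erase r),
      (x.body.card + 1) < ruleM D := by
  set r' : Rule := Rule.mk (r.body.erase q) r.head r.kind with hr'
  have hmeas : r'.body.card + 1 < r.body.card + 1 := by
    have := Finset.card_erase_lt_of_mem hq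
    simpa [hr'] using Nat.succ_lt_succ this
  have h1 : ∑ x ∈ insert r' (D.rules.erase r), (x.body.card + 1) ≤
      (r'.body.card + 1) + ∑ x ∈ D.rules.erase r, (x.body.card + 1) := by
    by_cases hmem : r' ∈ D.rules.erase r
    · rw [Finset.insert_eq_self.2 hmem]
      exact Nat.le_add_left _ _
    · rw [Finset.sum_insert hmem]
  have h2 : (r.body.card + 1) + ∑ x ∈ D.rules.erase r, (x.body.card + 1)
      = ∑ x ∈ D.rules, (x.body.card + 1) := by
    exact Finset.add_sum_erase _ (fun x => x.body.card + 1) hr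
  rw [ruleM, ← h2]
  omega

/-- Each proper transition decreases the measure lexicographically. -/
lemma tsMeasure_lt (D0 : DTheory) {s s' : DTheory × Set TaggedLit}
    (h : DLTrans D0.lits s s') (hne : s' ≠ s) :
    Prod.Lex (· < ·) (· < ·) (tsMeasure D0 s') (tsMeasure D0 s) := by
  classical
  cases h with
  | t1 D C q hq hfact =>
      have hx : ∃ x ∈ ({TaggedLit.pDelta q, TaggedLit.pPartial q,
          TaggedLit.pSigma q} : Set TaggedLit), x ∉ C := by
        by_contra hcon
        push_neg at hcon
        apply hne
        have : C ∪ {TaggedLit.pDelta q, TaggedLit.pPartial q, TaggedLit.pSigma q} = C := by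
          apply Set.union_eq_self_of_subset_right
          intro x hxm; exact hcon x hxm
        simp [this]
      obtain ⟨x, hxm, hxC⟩ := hx
      have hxT : x ∈ D0.tagFin := by
        have hlit : x.lit = q := by
          rcases hxm with h | h | h <;> subst h <;> rfl
        exact lit_mem_tagFin (hlit ▸ hq)
      exact Prod.Lex.left _ _ (muC_lt D0 Set.subset_union_left hxT hxC
        (Set.mem_union_right _ hxm))
  | t2 D C q hq hr =>
      have hxC : TaggedLit.pSigma q ∉ C := by
        intro hmem; exact hne (by simp [Set.insert_eq_self.2 hmem])
      exact Prod.Lex.left _ _ (muC_lt D0 (Set.subset_insert _ _)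
        (lit_mem_tagFin (show (TaggedLit.pSigma q).lit ∈ D0.lits from hq))
        hxC (Set.mem_insert _ _))
  | t3 D C q hq h1 h2 =>
      have hxC : TaggedLit.mDelta q ∉ C := by
        intro hmem; exact hne (by simp [Set.insert_eq_self.2 hmem])
      exact Prod.Lex.left _ _ (muC_lt D0 (Set.subset_insert _ _)
        (lit_mem_tagFin (show (TaggedLit.mDelta q).lit ∈ D0.lits from hq))
        hxC (Set.mem_insert _ _))
  | t4 D C q hq h1 =>
      have hxC : TaggedLit.mSigma q ∉ C := by
        intro hmem; exact hne (by simp [Set.insert_eq_self.2 hmem])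
      exact Prod.Lex.left _ _ (muC_lt D0 (Set.subset_insert _ _)
        (lit_mem_tagFin (show (TaggedLit.mSigma q).lit ∈ D0.lits from hq))
        hxC (Set.mem_insert _ _))
  | t5 D C q hq h1 =>
      have hxC : TaggedLit.pPartial q ∉ C := by
        intro hmem; exact hne (by simp [Set.insert_eq_self.2 hmem])
      exact Prod.Lex.left _ _ (muC_lt D0 (Set.subset_insert _ _)
        (lit_mem_tagFin (show (TaggedLit.pPartial q).lit ∈ D0.lits from hq))
        hxC (Set.mem_insert _ _))
  | t6 D C q hq h1 h2 =>
      have hxC : TaggedLit.mPartial q ∉ C := by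
        intro hmem; exact hne (by simp [Set.insert_eq_self.2 hmem])
      exact Prod.Lex.left _ _ (muC_lt D0 (Set.subset_insert _ _)
        (lit_mem_tagFin (show (TaggedLit.mPartial q).lit ∈ D0.lits from hq))
        hxC (Set.mem_insert _ _))
  | t7 D C r q hr hk hq hc =>
      exact Prod.Lex.right _ (ruleM_replace_lt hr hq)
  | t8 D C r q hr hk hq hc =>
      exact Prod.Lex.right _ (ruleM_replace_lt hr hq)
  | t9 D C r q hr hk hq hc =>
      exact Prod.Lex.right _ (ruleM_erase_lt hr)
  | t10 D C r q hr hk hq hc =>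
      exact Prod.Lex.right _ (ruleM_erase_lt hr)

lemma lexNat_wf : WellFounded (Prod.Lex (· < · : ℕ → ℕ → Prop) (· < · : ℕ → ℕ → Prop)) :=
  WellFounded.prod_lex wellFounded_lt wellFounded_lt

/-- Termination of the transition system: from any state
(D, C) with C a set of extended conclusions over the literals of the language
of D, there is no infinite sequence of properly state-changing transitions;
consequently every maximal transition sequence from (D, ∅) reaches a stuck
state. -/
theorem transition_system_terminates (D : DTheory) (C : Set TaggedLit)
    (hC : ∀ c ∈ C, c.lit ∈ D.lits) :
    (¬ ∃ f : ℕ → DTheory × Set TaggedLit, f 0 = (D, C) ∧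
        ∀ n, DLTrans D.lits (f n) (f (n + 1)) ∧ f (n + 1) ≠ f n) ∧
    (∀ s : DTheory × Set TaggedLit,
        Relation.ReflTransGen (DLTrans D.lits) (D, (∅ : Set TaggedLit)) s →
        ∃ s', Relation.ReflTransGen (DLTrans D.lits) s s' ∧ Stuck D.lits s') := by
  classical
  set R : (DTheory × Set TaggedLit) → (DTheory × Set TaggedLit) → Prop :=
    fun s t => Prod.Lex (· < · : ℕ → ℕ → Prop) (· < ·) (tsMeasure D s) (tsMeasure D t)
    with hR
  have wf : WellFounded R := InvImage.wf _ lexNat_wf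
  constructor
  · rintro ⟨f, hf0, hf⟩
    have hstep : ∀ n, R (f (n + 1)) (f n) :=
      fun n => tsMeasure_lt D (hf n).1 (hf n).2
    have key : ∀ a, Acc R a → ∀ n, f n = a → False := by
      intro a ha
      induction ha with
      | intro a _ ih =>
        intro n hn
        exact ih _ (hn ▸ hstep n) (n + 1) rfl
    exact key (f 0) (wf.apply _) 0 rfl
  · intro s hreach
    clear hreach hC
    induction s using wf.induction with
    | _ s ih =>
      by_cases hs : Stuck D.lits s
      · exact ⟨s, Relation.ReflTransGen.refl, hs⟩
      · have : ∃ t, DLTrans D.lits s t ∧ t ≠ s := by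
          by_contra hcon
          push_neg at hcon
          exact hs hcon
        obtain ⟨t, ht, hne⟩ := this
        obtain ⟨u, hu, hstuck⟩ := ih t (tsMeasure_lt D ht hne)
        exact ⟨u, Relation.ReflTransGen.head ht hu, hstuck⟩
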